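/- arXiv:2204.12358 — 5 statements merged into one kernel-verified Lean document; each statement's English description precedes it below -/
import Mathlib

section
/- Let p ∈ [1,∞), z ≥ 1, let C be a nonempty finite index set, let x_i ∈ ℝ^d for i ∈ C, and let c ∈ ℝ^d. Then Σ_{t∈C} Σ_{i∈C} ‖x_i − x_t‖_p^z ≤ 2^z · |C| · Σ_{i∈C} ‖x_i − c‖_p^z. Equivalently, the expected cost of clustering the points of C around a uniformly random data point of C is at most 2^z times the cost of clustering them around the center c. -/
open Finset Real

/-!
For any three points, the triangle inequality through `c` and the convexity bound
`(a + b) ^ z ≤ 2 ^ (z - 1) * (a ^ z + b ^ z)` give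
`d(xᵢ, xₜ) ^ z ≤ 2 ^ (z - 1) * (d(xᵢ, c) ^ z + d(xₜ, c) ^ z)`.
Summing over `i` and `t`, each of the two terms contributes `|C|` times the cost around `c`.
Only the triangle inequality is used, so this works in any pseudometric space; the `ℓᵖ`
expression is the distance of `PiLp p`.
-/

theorem Real.add_rpow_le_two_rpow_sub_one_mul {a b z : ℝ} (ha : 0 ≤ a) (hb : 0 ≤ b)
    (hz : 1 ≤ z) : (a + b) ^ z ≤ 2 ^ (z - 1) * (a ^ z + b ^ z) := by
  exact_mod_cast NNReal.coe_le_coe.2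
    (NNReal.rpow_add_le_mul_rpow_add_rpow ⟨a, ha⟩ ⟨b, hb⟩ hz)

section PseudoMetric

variable {α : Type*} [PseudoMetricSpace α]

theorem dist_rpow_le_two_rpow_sub_one_mul (x y c : α) {z : ℝ} (hz : 1 ≤ z) :
    dist x y ^ z ≤ 2 ^ (z - 1) * (dist x c ^ z + dist y c ^ z) :=
  calc dist x y ^ z
      ≤ (dist x c + dist y c) ^ z :=
        rpow_le_rpow dist_nonneg (dist_triangle_right x y c) (zero_le_one.trans hz)
    _ ≤ 2 ^ (z - 1) * (dist x c ^ z + dist y c ^ z) :=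
        add_rpow_le_two_rpow_sub_one_mul dist_nonneg dist_nonneg hz

theorem sum_sum_dist_rpow_le {ι : Type*} (C : Finset ι) (x : ι → α) (c : α) {z : ℝ}
    (hz : 1 ≤ z) :
    ∑ t ∈ C, ∑ i ∈ C, dist (x i) (x t) ^ z
      ≤ 2 ^ z * C.card * ∑ i ∈ C, dist (x i) c ^ z := by
  set S := ∑ i ∈ C, dist (x i) c ^ z
  have two_rpow : (2 : ℝ) ^ z = 2 ^ (z - 1) * 2 := by
    rw [← rpow_add_one two_ne_zero, sub_add_cancel]
  calc ∑ t ∈ C, ∑ i ∈ C, dist (x i) (x t) ^ z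
      ≤ ∑ t ∈ C, ∑ i ∈ C, 2 ^ (z - 1) * (dist (x i) c ^ z + dist (x t) c ^ z) :=
        sum_le_sum fun t _ => sum_le_sum fun i _ =>
          dist_rpow_le_two_rpow_sub_one_mul _ _ _ hz
    _ = ∑ t ∈ C, 2 ^ (z - 1) * (S + C.card * dist (x t) c ^ z) := by
        simp only [← mul_sum, sum_add_distrib, sum_const, nsmul_eq_mul, S]
    _ = 2 ^ z * C.card * S := by
        rw [← mul_sum, sum_add_distrib, sum_const, nsmul_eq_mul, ← mul_sum, two_rpow]
        ring

end PseudoMetric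

theorem PiLp.dist_toLp_eq_sum_abs_rpow {κ : Type*} [Fintype κ] {p : ℝ} (hp : 1 ≤ p)
    (u v : κ → ℝ) :
    dist (WithLp.toLp (ENNReal.ofReal p) u) (WithLp.toLp (ENNReal.ofReal p) v)
      = (∑ j, |u j - v j| ^ p) ^ (1 / p) := by
  have hp0 : 0 ≤ p := zero_le_one.trans hp
  rw [PiLp.dist_eq_sum (by rw [ENNReal.toReal_ofReal hp0]; linarith),
    ENNReal.toReal_ofReal hp0]
  simp only [Real.dist_eq]

theorem stmt_1_general {ι : Type*} (d : ℕ) (C : Finset ι)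
    (p z : ℝ) (hp : 1 ≤ p) (hz : 1 ≤ z)
    (x : ι → Fin d → ℝ) (c : Fin d → ℝ) :
    ∑ t ∈ C, ∑ i ∈ C, ((∑ j : Fin d, |x i j - x t j| ^ p) ^ (1 / p)) ^ z
      ≤ (2 : ℝ) ^ z * C.card *
        ∑ i ∈ C, ((∑ j : Fin d, |x i j - c j| ^ p) ^ (1 / p)) ^ z := by
  have : Fact (1 ≤ ENNReal.ofReal p) := ⟨by simpa using hp⟩
  simpa only [PiLp.dist_toLp_eq_sum_abs_rpow hp] using
    sum_sum_dist_rpow_le C (fun i => WithLp.toLp (ENNReal.ofReal p) (x i))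
      (WithLp.toLp (ENNReal.ofReal p) c) hz

/-- The expected cost of clustering the points of `C` around a uniformly random data point
of `C` is at most `2^z` times the cost of clustering them around the center `c`. -/
theorem stmt_1 {ι : Type*} (d : ℕ) (C : Finset ι) (hC : C.Nonempty)
    (p z : ℝ) (hp : 1 ≤ p) (hz : 1 ≤ z)
    (x : ι → Fin d → ℝ) (c : Fin d → ℝ) :
    ∑ t ∈ C, ∑ i ∈ C, ((∑ j : Fin d, |x i j - x t j| ^ p) ^ (1 / p)) ^ z
      ≤ (2 : ℝ) ^ z * C.card *
        ∑ i ∈ C, ((∑ j : Fin d, |x i j - c j| ^ p) ^ (1 / p)) ^ z :=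
  stmt_1_general d C p z hp hz x c
end

section
/- Let p ∈ [1,∞), let n ≥ 1, let λ_1,…,λ_n be weights, and let a_1,…,a_n ∈ ℝ satisfy Σ_{i=1}^n λ_i a_i = 0. Then Σ_{i=1}^n λ_i |a_i|^p ≤ Σ_{i=1}^n Σ_{i'=1}^n λ_i λ_{i'} |a_i − a_{i'}|^p. -/
open Finset Real

section WeightedNormRpow

variable {ι E : Type*} [SeminormedAddCommGroup E] [NormedSpace ℝ E]
  {s : Finset ι} {w : ι → ℝ} {p : ℝ}

theorem norm_sum_smul_rpow_le (hw : ∀ i ∈ s, 0 ≤ w i) (hw₁ : ∑ i ∈ s, w i = 1) (hp : 1 ≤ p)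
    (v : ι → E) : ‖∑ i ∈ s, w i • v i‖ ^ p ≤ ∑ i ∈ s, w i * ‖v i‖ ^ p := by
  have h_triangle : ‖∑ i ∈ s, w i • v i‖ ≤ ∑ i ∈ s, w i * ‖v i‖ := by
    refine (norm_sum_le _ _).trans_eq (sum_congr rfl fun i hi => ?_)
    rw [norm_smul, Real.norm_of_nonneg (hw i hi)]
  calc ‖∑ i ∈ s, w i • v i‖ ^ p ≤ (∑ i ∈ s, w i * ‖v i‖) ^ p :=
        rpow_le_rpow (norm_nonneg _) h_triangle (zero_le_one.trans hp)
    _ ≤ ∑ i ∈ s, w i * ‖v i‖ ^ p :=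
        rpow_arith_mean_le_arith_mean_rpow s w _ hw hw₁ (fun i _ => norm_nonneg (v i)) hp

theorem norm_rpow_le_sum_mul_norm_sub_rpow (hw : ∀ i ∈ s, 0 ≤ w i) (hw₁ : ∑ i ∈ s, w i = 1)
    (hp : 1 ≤ p) {a : ι → E} (ha : ∑ i ∈ s, w i • a i = 0) (x : E) :
    ‖x‖ ^ p ≤ ∑ i ∈ s, w i * ‖x - a i‖ ^ p := by
  have hx : x = ∑ i ∈ s, w i • (x - a i) := by
    simp only [smul_sub, sum_sub_distrib, ← sum_smul, hw₁, one_smul, ha, sub_zero]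
  calc ‖x‖ ^ p = ‖∑ i ∈ s, w i • (x - a i)‖ ^ p := by rw [← hx]
    _ ≤ ∑ i ∈ s, w i * ‖x - a i‖ ^ p := norm_sum_smul_rpow_le hw hw₁ hp _

end WeightedNormRpow

theorem stmt_3_general (n : ℕ) (p : ℝ) (hp : 1 ≤ p)
    (lam : Fin n → ℝ) (hlam : ∀ i, 0 ≤ lam i) (hsum : ∑ i, lam i = 1)
    (a : Fin n → ℝ) (hcenter : ∑ i, lam i * a i = 0) :
    ∑ i, lam i * |a i| ^ p ≤ ∑ i, ∑ i', lam i * lam i' * |a i - a i'| ^ p := by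
  have h_pointwise (i : Fin n) : |a i| ^ p ≤ ∑ i', lam i' * |a i - a i'| ^ p := by
    simpa only [Real.norm_eq_abs] using
      norm_rpow_le_sum_mul_norm_sub_rpow (fun i _ => hlam i) hsum hp hcenter (a i)
  calc ∑ i, lam i * |a i| ^ p ≤ ∑ i, lam i * ∑ i', lam i' * |a i - a i'| ^ p :=
        sum_le_sum fun i _ => mul_le_mul_of_nonneg_left (h_pointwise i) (hlam i)
    _ = ∑ i, ∑ i', lam i * lam i' * |a i - a i'| ^ p := by
        simp only [mul_sum, mul_assoc]

/-- For centered weighted points on the line, the weighted `p`-th moment about zero is at most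
the average pairwise `p`-th power distance. -/
theorem stmt_3 (n : ℕ) (hn : 1 ≤ n) (p : ℝ) (hp : 1 ≤ p)
    (lam : Fin n → ℝ) (hlam : ∀ i, 0 ≤ lam i) (hsum : ∑ i, lam i = 1)
    (a : Fin n → ℝ) (hcenter : ∑ i, lam i * a i = 0) :
    ∑ i, lam i * |a i| ^ p ≤ ∑ i, ∑ i', lam i * lam i' * |a i - a i'| ^ p :=
  stmt_3_general n p hp lam hlam hsum a hcenter
end

section
/- Let p ∈ [1,2], let ε ∈ (0,1/2], let λ_1,…,λ_n be weights, and let a_1,…,a_n ∈ ℝ satisfy Σ_{i=1}^n λ_i a_i = 0. Set A = (Σ_{i=1}^n λ_i |a_i|^p)^{1/p}, and let γ ∈ ℝ satisfy (1−ε)·A ≤ γ ≤ (1+ε)·A. Let t be an integer with t ≥ 16·2^p/ε, and define grid points y_ℓ = −4γ + 8γℓ/t for ℓ ∈ {0,1,…,t}. Then min_{0≤ℓ≤t} (Σ_{i=1}^n λ_i |a_i − y_ℓ|^p)^{1/p} ≤ (1 + ε/2) · inf_{z∈ℝ} (Σ_{i=1}^n λ_i |a_i − z|^p)^{1/p}.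 -/
open Finset Real

/-
The cost `c z = (∑ λ_i |a_i - z|^p)^(1/p)` is 1-Lipschitz (weighted Minkowski) and, since the
`a_i` have weighted mean `0`, it dominates `|z|` (power mean inequality); in particular
`A = c 0 ≤ c z + |z| ≤ 2 c z` for every `z`. A center `z` with `|z| ≤ 4γ` lies within
`4γ/t ≤ εA/4 ≤ (ε/2) c z` of a grid point, while a center with `|z| > 4γ ≥ 2A` costs more than
`A + εA/4`, which the grid point nearest to `0` achieves.
-/

lemma abs_rpow_one_div_mul_rpow {w p : ℝ} (hw : 0 ≤ w) (hp : p ≠ 0) (x : ℝ) :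
    |w ^ (1 / p) * x| ^ p = w * |x| ^ p := by
  rw [abs_mul, abs_of_nonneg (rpow_nonneg hw _), mul_rpow (rpow_nonneg hw _) (abs_nonneg x),
    ← rpow_mul hw, one_div_mul_cancel hp, rpow_one]

theorem weighted_Lp_add_le {ι : Type*} (s : Finset ι) {w : ι → ℝ} (hw : ∀ i ∈ s, 0 ≤ w i)
    (f g : ι → ℝ) {p : ℝ} (hp : 1 ≤ p) :
    (∑ i ∈ s, w i * |f i + g i| ^ p) ^ (1 / p) ≤
      (∑ i ∈ s, w i * |f i| ^ p) ^ (1 / p) + (∑ i ∈ s, w i * |g i| ^ p) ^ (1 / p) := by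
  have hp0 : p ≠ 0 := by positivity
  have hscale : ∀ h : ι → ℝ,
      ∑ i ∈ s, |w i ^ (1 / p) * h i| ^ p = ∑ i ∈ s, w i * |h i| ^ p := fun h =>
    sum_congr rfl fun i hi => abs_rpow_one_div_mul_rpow (hw i hi) hp0 (h i)
  simpa only [← mul_add, hscale] using
    Real.Lp_add_le s (fun i => w i ^ (1 / p) * f i) (fun i => w i ^ (1 / p) * g i) hp

lemma exists_abs_sub_grid_le {lo L w : ℝ} {t : ℕ} (ht : 0 < t) (hlo : lo ≤ w)
    (hhi : w ≤ lo + L) : ∃ ℓ ≤ t, |w - (lo + L * ℓ / t)| ≤ L / (2 * t) := by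
  have htR : (0 : ℝ) < t := Nat.cast_pos.mpr ht
  rcases (show 0 ≤ L by linarith).eq_or_lt with rfl | hL
  · exact ⟨0, t.zero_le, by simp [le_antisymm (by linarith) hlo]⟩
  set r := (w - lo) * t / L with hr
  have hr0 : 0 ≤ r := by positivity
  have hrt : r ≤ t := by
    rw [hr, div_le_iff₀ hL, mul_comm (t : ℝ)]
    exact mul_le_mul_of_nonneg_right (by linarith) htR.le
  have hfloor_le : (⌊r + 1 / 2⌋₊ : ℝ) ≤ r + 1 / 2 := Nat.floor_le (by linarith)
  have hlt_floor : r + 1 / 2 < ⌊r + 1 / 2⌋₊ + 1 := Nat.lt_floor_add_one _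
  have hround_lt : (⌊r + 1 / 2⌋₊ : ℝ) < t + 1 := by linarith
  refine ⟨⌊r + 1 / 2⌋₊, Nat.lt_succ_iff.mp (by exact_mod_cast hround_lt), ?_⟩
  have hsub : w - (lo + L * ⌊r + 1 / 2⌋₊ / t) = L / t * (r - ⌊r + 1 / 2⌋₊) := by
    rw [hr]
    field_simp
    ring
  calc |w - (lo + L * ⌊r + 1 / 2⌋₊ / t)| = L / t * |r - ⌊r + 1 / 2⌋₊| := by
        rw [hsub, abs_mul, abs_of_pos (by positivity)]
    _ ≤ L / t * (1 / 2) := by gcongr; exact abs_le.mpr ⟨by linarith, by linarith⟩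
    _ = L / (2 * t) := by ring

section WeightedCost

variable {ι : Type*} [Fintype ι] (w a : ι → ℝ) (p : ℝ)

noncomputable def lpCost (z : ℝ) : ℝ := (∑ i, w i * |a i - z| ^ p) ^ (1 / p)

variable {w a p}

theorem lipschitzWith_lpCost (hw : ∀ i, 0 ≤ w i) (hw1 : ∑ i, w i = 1) (hp : 1 ≤ p) :
    LipschitzWith 1 (lpCost w a p) := by
  refine LipschitzWith.of_le_add fun x y => ?_
  have hconst : (∑ i, w i * |y - x| ^ p) ^ (1 / p) = dist x y := by
    rw [← sum_mul, hw1, one_mul, one_div, rpow_rpow_inv (abs_nonneg _) (by positivity),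
      abs_sub_comm, Real.dist_eq]
  simpa only [lpCost, sub_add_sub_cancel, hconst] using
    weighted_Lp_add_le univ (fun i _ => hw i) (fun i => a i - y) (fun _ => y - x) hp

theorem abs_le_lpCost (hw : ∀ i, 0 ≤ w i) (hw1 : ∑ i, w i = 1) (hmean : ∑ i, w i * a i = 0)
    (hp : 1 ≤ p) (z : ℝ) : |z| ≤ lpCost w a p z := by
  have hz : z = ∑ i, w i * (z - a i) := by
    simp only [mul_sub, sum_sub_distrib, ← sum_mul, hw1, hmean, one_mul, sub_zero]
  calc |z| = |∑ i, w i * (z - a i)| := by rw [← hz]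
    _ ≤ ∑ i, w i * |a i - z| := by
        refine (abs_sum_le_sum_abs _ _).trans_eq (sum_congr rfl fun i _ => ?_)
        rw [abs_mul, abs_of_nonneg (hw i), abs_sub_comm]
    _ ≤ lpCost w a p z :=
        arith_mean_le_rpow_mean univ w _ (fun i _ => hw i) hw1 (fun i _ => abs_nonneg _) hp

end WeightedCost

section GridSearch

variable {ι : Type*} {s : Finset ι} {y : ι → ℝ} {f : ℝ → ℝ} {R δ ε : ℝ}

theorem exists_mem_net_le_one_add_half_mul (hf : LipschitzWith 1 f) (habs : ∀ z, |z| ≤ f z)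
    (hε : 0 ≤ ε) (hR : 2 * f 0 ≤ R) (hδ : δ ≤ ε / 4 * f 0)
    (hnet : ∀ x, |x| ≤ R → ∃ ℓ ∈ s, |x - y ℓ| ≤ δ) (z : ℝ) :
    ∃ ℓ ∈ s, f (y ℓ) ≤ (1 + ε / 2) * f z := by
  have hf0 : 0 ≤ f 0 := (abs_nonneg _).trans (habs 0)
  have hlip : ∀ x x', f x ≤ f x' + |x - x'| := fun x x' => by
    simpa [Real.dist_eq] using hf.le_add_mul x x'
  have h0z : f 0 ≤ 2 * f z := by
    have h := hlip 0 z
    rw [zero_sub, abs_neg] at h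
    linarith [habs z]
  rcases le_or_gt |z| R with hz | hz
  · obtain ⟨ℓ, hℓ, hnear⟩ := hnet z hz
    refine ⟨ℓ, hℓ, ?_⟩
    linarith [hlip (y ℓ) z, abs_sub_comm (y ℓ) z, mul_le_mul_of_nonneg_left h0z hε]
  -- far from the origin, the grid point next to `0` already beats `z`
  · obtain ⟨ℓ, hℓ, hnear⟩ := hnet 0 (by rw [abs_zero]; linarith)
    refine ⟨ℓ, hℓ, ?_⟩
    have hfz : 2 * f 0 ≤ f z := by linarith [habs z]
    linarith [hlip (y ℓ) 0, abs_sub_comm (y ℓ) 0, mul_le_mul_of_nonneg_left hfz hε,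
      mul_nonneg hε hf0]

theorem inf'_net_le_one_add_half_mul_iInf (hs : s.Nonempty) (hf : LipschitzWith 1 f)
    (habs : ∀ z, |z| ≤ f z) (hε : 0 ≤ ε) (hR : 2 * f 0 ≤ R) (hδ : δ ≤ ε / 4 * f 0)
    (hnet : ∀ x, |x| ≤ R → ∃ ℓ ∈ s, |x - y ℓ| ≤ δ) :
    s.inf' hs (fun ℓ => f (y ℓ)) ≤ (1 + ε / 2) * ⨅ z, f z := by
  rw [Real.mul_iInf_of_nonneg (by linarith)]
  refine le_ciInf fun z => ?_
  obtain ⟨ℓ, hℓ, hle⟩ := exists_mem_net_le_one_add_half_mul hf habs hε hR hδ hnet z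
  exact (inf'_le _ hℓ).trans hle

end GridSearch

/-- Grid search over `O(2^p/ε)` evenly spaced candidate centers in `[-4γ, 4γ]` achieves a
`(1 + ε/2)`-approximation to the optimal one-dimensional weighted `ℓ_p^p`-median cost. -/
theorem stmt_7 (n : ℕ) (p : ℝ) (hp : 1 ≤ p)
    (eps : ℝ) (heps : 0 < eps) (heps2 : eps ≤ 1 / 2)
    (lam : Fin n → ℝ) (hlam : ∀ i, 0 ≤ lam i) (hsum : ∑ i, lam i = 1)
    (a : Fin n → ℝ) (hcenter : ∑ i, lam i * a i = 0)
    (gamma : ℝ)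
    (hgamma1 : (1 - eps) * (∑ i, lam i * |a i| ^ p) ^ (1 / p) ≤ gamma)
    (hgamma2 : gamma ≤ (1 + eps) * (∑ i, lam i * |a i| ^ p) ^ (1 / p))
    (t : ℕ) (ht : 16 * (2 : ℝ) ^ p / eps ≤ (t : ℝ))
    (y : ℕ → ℝ) (hy : ∀ ℓ, y ℓ = -4 * gamma + 8 * gamma * (ℓ : ℝ) / (t : ℝ)) :
    ((Finset.range (t + 1)).inf' (by simp) fun ℓ =>
        (∑ i, lam i * |a i - y ℓ| ^ p) ^ (1 / p))
      ≤ (1 + eps / 2) * ⨅ z : ℝ, (∑ i, lam i * |a i - z| ^ p) ^ (1 / p) := by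
  have habs := abs_le_lpCost hlam hsum hcenter hp
  have hA : lpCost lam a p 0 = (∑ i, lam i * |a i| ^ p) ^ (1 / p) := by
    simp only [lpCost, sub_zero]
  rw [← hA] at hgamma1 hgamma2
  have hA0 : 0 ≤ lpCost lam a p 0 := (abs_nonneg 0).trans (habs 0)
  have htpos : (0 : ℝ) < t := lt_of_lt_of_le (by positivity) ht
  have heps_t : 32 ≤ eps * t := by
    have h2p : (2 : ℝ) ≤ 2 ^ p := by simpa using rpow_le_rpow_of_exponent_le one_le_two hp
    rw [div_le_iff₀ heps] at ht
    linarith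
  have hnet : ∀ x, |x| ≤ 4 * gamma → ∃ ℓ ∈ range (t + 1), |x - y ℓ| ≤ 8 * gamma / (2 * t) := by
    intro x hx
    obtain ⟨ℓ, hℓt, hℓ⟩ := exists_abs_sub_grid_le (lo := -4 * gamma) (L := 8 * gamma) (w := x)
      (Nat.cast_pos.mp htpos) (by linarith [(abs_le.mp hx).1]) (by linarith [(abs_le.mp hx).2])
    exact ⟨ℓ, mem_range.mpr (Nat.lt_succ_of_le hℓt), by rwa [hy]⟩
  have heps_A := mul_le_mul_of_nonneg_right heps2 hA0
  refine inf'_net_le_one_add_half_mul_iInf _ (lipschitzWith_lpCost hlam hsum hp) habs heps.le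
    (by linarith) ?_ hnet
  rw [div_le_iff₀ (by positivity)]
  linarith [mul_le_mul_of_nonneg_right heps_t hA0]
end

section
/- Let p ∈ [1,2], let ε ∈ (0,1), let d, B ≥ 1 be integers with B ≥ 10/ε^p, let v ∈ ℝ^d, and fix j ∈ {1,…,d}. If h is drawn uniformly at random from the set of all functions {1,…,d} → {1,…,B}, then with probability at least 9/10, (Σ_{j'≠j} 1{h(j')=h(j)} · |v_{j'}|^p)^{1/p} ≤ ε · (Σ_{j'=1}^d |v_{j'}|^p)^{1/p}. -/
open Finset Real

/-! Each coordinate `i ≠ j` lands in the bucket of `j` for exactly a `1/B` fraction of the hash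
functions, so the average collision mass is at most `‖v‖_p^p / B ≤ ε^p ‖v‖_p^p / 10`. By Markov's
inequality it exceeds `ε^p ‖v‖_p^p` for at most a tenth of the hash functions; taking `p`-th roots
gives the claim. -/

theorem Finset.card_filter_lt_nsmul_le_sum {ι M : Type*} [AddCommMonoid M] [PartialOrder M]
    [IsOrderedAddMonoid M] (s : Finset ι) (f : ι → M) (hf : ∀ x ∈ s, 0 ≤ f x) (c : M)
    [DecidablePred fun x => c < f x] :
    #{x ∈ s | c < f x} • c ≤ ∑ x ∈ s, f x :=
  (card_nsmul_le_sum _ f c fun _ hx => (mem_filter.1 hx).2.le).trans <|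
    sum_le_sum_of_subset_of_nonneg (filter_subset _ s) fun x hx _ => hf x hx

theorem Real.rpow_one_div_le_mul_rpow_one_div {x y ε p : ℝ} (hx : 0 ≤ x) (hy : 0 ≤ y)
    (hε : 0 ≤ ε) (hp : 0 < p) (hxy : x ≤ ε ^ p * y) : x ^ (1 / p) ≤ ε * y ^ (1 / p) :=
  calc x ^ (1 / p) ≤ (ε ^ p * y) ^ (1 / p) := by gcongr
    _ = ε * y ^ (1 / p) := by
      rw [mul_rpow (by positivity) hy, ← rpow_mul hε, mul_one_div_cancel hp.ne', rpow_one]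

section Collisions

variable {α β : Type*} [Fintype α] [DecidableEq α] [DecidableEq β]

def collisionMass {M : Type*} [AddCommMonoid M] (w : α → M) (j : α) (h : α → β) : M :=
  ∑ i ∈ univ.erase j, if h i = h j then w i else 0

theorem collisionMass_nonneg {w : α → ℝ} (hw : ∀ i, 0 ≤ w i) (j : α) (h : α → β) :
    0 ≤ collisionMass w j h :=
  sum_nonneg fun i _ => ite_nonneg (hw i) le_rfl

theorem collisionMass_le_sum {w : α → ℝ} (hw : ∀ i, 0 ≤ w i) (j : α) (h : α → β) :
    collisionMass w j h ≤ ∑ i, w i := by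
  rw [collisionMass, ← sum_filter]
  exact sum_le_sum_of_subset_of_nonneg (subset_univ _) fun i _ _ => hw i

variable [Fintype β]

theorem card_filter_apply_eq_apply {i j : α} (hij : i ≠ j) :
    #{h : α → β | h i = h j} = Fintype.card β ^ (Fintype.card α - 1) := by
  let e : {h : α → β // h i = h j} ≃ ({k // k ≠ j} → β) :=
    { toFun h k := h.1 k
      invFun g := ⟨fun k => if hk : k = j then g ⟨i, hij⟩ else g ⟨k, hk⟩, by simp [hij]⟩
      left_inv h := by ext k; by_cases hk : k = j <;> simp [hk, h.2]
      right_inv g := by ext k; simp [k.2] }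
  rw [← Fintype.card_subtype, Fintype.card_congr e, Fintype.card_fun]
  simp

theorem sum_collisionMass {M : Type*} [AddCommMonoid M] (w : α → M) (j : α) :
    ∑ h : α → β, collisionMass w j h =
      Fintype.card β ^ (Fintype.card α - 1) • ∑ i ∈ univ.erase j, w i := by
  simp only [collisionMass]
  rw [sum_comm, smul_sum]
  refine sum_congr rfl fun i hi => ?_
  rw [← sum_filter, sum_const, card_filter_apply_eq_apply (ne_of_mem_erase hi)]

theorem card_filter_lt_collisionMass_mul_le {w : α → ℝ} (hw : ∀ i, 0 ≤ w i) (j : α) (δ : ℝ) :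
    (#{h : α → β | δ * ∑ i, w i < collisionMass w j h} : ℝ) * δ ≤
      (Fintype.card β : ℝ) ^ (Fintype.card α - 1) := by
  obtain hW | hW := (sum_nonneg fun i _ => hw i : 0 ≤ ∑ i, w i).eq_or_lt
  · rw [filter_false_of_mem fun h _ => ?_, card_empty, Nat.cast_zero, zero_mul]
    · positivity
    simpa [← hW] using collisionMass_le_sum hw j h
  refine le_of_mul_le_mul_right ?_ hW
  calc (#{h : α → β | δ * ∑ i, w i < collisionMass w j h} : ℝ) * δ * ∑ i, w i
      = #{h : α → β | δ * ∑ i, w i < collisionMass w j h} • (δ * ∑ i, w i) := by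
        rw [nsmul_eq_mul, mul_assoc]
    _ ≤ ∑ h : α → β, collisionMass w j h :=
        card_filter_lt_nsmul_le_sum _ _ (fun h _ => collisionMass_nonneg hw j h) _
    _ ≤ (Fintype.card β : ℝ) ^ (Fintype.card α - 1) * ∑ i, w i := by
        rw [sum_collisionMass, nsmul_eq_mul, Nat.cast_pow]
        gcongr
        exacts [fun i _ _ => hw i, subset_univ _]

end Collisions

theorem stmt_10_general (p : ℝ) (hp : 1 ≤ p) (eps : ℝ) (heps : 0 < eps)
    (d B : ℕ) (hB2 : 10 / eps ^ p ≤ (B : ℝ))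
    (v : Fin d → ℝ) (j : Fin d) :
    (9 : ℝ) / 10 * (Fintype.card (Fin d → Fin B) : ℝ) ≤
      ((Finset.univ.filter fun h : Fin d → Fin B =>
          (∑ j' ∈ Finset.univ.erase j, if h j' = h j then |v j'| ^ p else 0) ^ (1 / p)
            ≤ eps * (∑ j' : Fin d, |v j'| ^ p) ^ (1 / p)).card : ℝ) := by
  set w : Fin d → ℝ := fun i => |v i| ^ p
  have hw (i) : 0 ≤ w i := by positivity
  have hepsp : 0 < eps ^ p := rpow_pos_of_pos heps p
  set c := eps ^ p * ∑ i, w i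
  set bad : Finset (Fin d → Fin B) := {h | c < collisionMass w j h}
  have hbad : (#bad : ℝ) * 10 ≤ Fintype.card (Fin d → Fin B) := by
    have hmarkov := card_filter_lt_collisionMass_mul_le (β := Fin B) hw j (eps ^ p)
    rw [Fintype.card_fin, Fintype.card_fin] at hmarkov
    have hB : 10 ≤ eps ^ p * B := by rwa [div_le_iff₀' hepsp] at hB2
    calc (#bad : ℝ) * 10 ≤ #bad * eps ^ p * B := by rw [mul_assoc]; gcongr
      _ ≤ (B : ℝ) ^ (d - 1) * B := by gcongr
      _ = Fintype.card (Fin d → Fin B) := by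
        rw [Fintype.card_fun, Fintype.card_fin, Fintype.card_fin, Nat.cast_pow, ← pow_succ,
          Nat.sub_add_cancel j.pos]
  have hsplit : (#bad : ℝ) + #{h : Fin d → Fin B | ¬c < collisionMass w j h} =
      Fintype.card (Fin d → Fin B) := by
    exact_mod_cast card_filter_add_card_filter_not _
  have hgood : #{h : Fin d → Fin B | ¬c < collisionMass w j h} ≤
      #{h | collisionMass w j h ^ (1 / p) ≤ eps * (∑ i, w i) ^ (1 / p)} :=
    card_le_card <| monotone_filter_right _ fun h _ hh =>
      rpow_one_div_le_mul_rpow_one_div (collisionMass_nonneg hw j h)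
        (sum_nonneg fun i _ => hw i) heps.le (by linarith) (not_lt.1 hh)
  calc (9 : ℝ) / 10 * Fintype.card (Fin d → Fin B)
      ≤ #{h : Fin d → Fin B | ¬c < collisionMass w j h} := by linarith
    _ ≤ _ := by exact_mod_cast hgood

/-- For a uniformly random hash function `h : {1,…,d} → {1,…,B}` with `B ≥ 10/ε^p`, with
probability at least `9/10` the colliding mass `(Σ_{j'≠j} 1{h(j')=h(j)} |v_{j'}|^p)^{1/p}` is
at most `ε ‖v‖_p`. -/
theorem stmt_10 (p : ℝ) (hp : 1 ≤ p) (hp2 : p ≤ 2) (eps : ℝ) (heps : 0 < eps) (heps1 : eps < 1)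
    (d B : ℕ) (hd : 1 ≤ d) (hB : 1 ≤ B) (hB2 : 10 / eps ^ p ≤ (B : ℝ))
    (v : Fin d → ℝ) (j : Fin d) :
    (9 : ℝ) / 10 * (Fintype.card (Fin d → Fin B) : ℝ) ≤
      ((Finset.univ.filter fun h : Fin d → Fin B =>
          (∑ j' ∈ Finset.univ.erase j, if h j' = h j then |v j'| ^ p else 0) ^ (1 / p)
            ≤ eps * (∑ j' : Fin d, |v j'| ^ p) ^ (1 / p)).card : ℝ) :=
  stmt_10_general p hp eps heps d B hB2 v j
end

section
/- Let p ∈ [1,2], let n, d ≥ 1, let λ_1,…,λ_n be weights, and let x_1,…,x_n ∈ ℝ^d satisfy Σ_{i=1}^n λ_i x_i = 0 (the zero vector in ℝ^d). Then 2^{−p} · Σ_{i=1}^n λ_i Σ_{j=1}^d |x_{ij}|^p ≤ inf_{c∈ℝ^d} Σ_{i=1}^n λ_i Σ_{j=1}^d |x_{ij} − c_j|^p ≤ Σ_{i=1}^n λ_i Σ_{j=1}^d |x_{ij}|^p. -/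
/-!
Coordinatewise, write `A = ∑ λᵢ |xᵢ - c|ᵖ`. Since the `xᵢ` have weighted mean `0`, the weighted
mean of `xᵢ - c` is `-c`, so Jensen gives `|c|ᵖ ≤ A`. Convexity of `t ↦ tᵖ` gives
`|xᵢ|ᵖ ≤ 2ᵖ⁻¹ (|xᵢ - c|ᵖ + |c|ᵖ)`, and averaging yields `∑ λᵢ |xᵢ|ᵖ ≤ 2ᵖ⁻¹ (A + |c|ᵖ) ≤ 2ᵖ A`.
The upper bound is the choice `c = 0`.
-/

open Finset Real

lemma abs_add_rpow_le {p : ℝ} (hp : 1 ≤ p) (a b : ℝ) :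
    |a + b| ^ p ≤ 2 ^ (p - 1) * (|a| ^ p + |b| ^ p) := by
  have hnn : ((⟨|a|, abs_nonneg a⟩ + ⟨|b|, abs_nonneg b⟩ : NNReal) : ℝ) ^ p
      ≤ 2 ^ (p - 1) * (|a| ^ p + |b| ^ p) :=
    mod_cast NNReal.rpow_add_le_mul_rpow_add_rpow _ _ hp
  exact (rpow_le_rpow (abs_nonneg _) (abs_add_le a b) (by linarith)).trans hnn

section WeightedMean

variable {ι : Type*} {s : Finset ι} {w : ι → ℝ} {p : ℝ}

lemma abs_weighted_mean_rpow_le (hw : ∀ i ∈ s, 0 ≤ w i) (hw' : ∑ i ∈ s, w i = 1)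
    (hp : 1 ≤ p) (z : ι → ℝ) :
    |∑ i ∈ s, w i * z i| ^ p ≤ ∑ i ∈ s, w i * |z i| ^ p := by
  have habs : |∑ i ∈ s, w i * z i| ≤ ∑ i ∈ s, w i * |z i| :=
    (abs_sum_le_sum_abs _ _).trans_eq <|
      sum_congr rfl fun i hi => by rw [abs_mul, abs_of_nonneg (hw i hi)]
  calc |∑ i ∈ s, w i * z i| ^ p ≤ (∑ i ∈ s, w i * |z i|) ^ p :=
        rpow_le_rpow (abs_nonneg _) habs (by linarith)
    _ ≤ ∑ i ∈ s, w i * |z i| ^ p :=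
        rpow_arith_mean_le_arith_mean_rpow s w _ hw hw' (fun i _ => abs_nonneg _) hp

lemma sum_mul_abs_rpow_le_two_rpow_mul_of_mean_eq_zero (hw : ∀ i ∈ s, 0 ≤ w i)
    (hw' : ∑ i ∈ s, w i = 1) (hp : 1 ≤ p) (y : ι → ℝ) (hy : ∑ i ∈ s, w i * y i = 0) (c : ℝ) :
    ∑ i ∈ s, w i * |y i| ^ p ≤ 2 ^ p * ∑ i ∈ s, w i * |y i - c| ^ p := by
  set A := ∑ i ∈ s, w i * |y i - c| ^ p
  have hmean : ∑ i ∈ s, w i * (y i - c) = -c := by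
    simp [mul_sub, sum_sub_distrib, ← sum_mul, hw', hy]
  have hc : |c| ^ p ≤ A := by
    simpa [hmean, abs_neg] using abs_weighted_mean_rpow_le hw hw' hp (fun i => y i - c)
  have hA : 0 ≤ A := sum_nonneg fun i hi => mul_nonneg (hw i hi) (by positivity)
  have htwo : (2 : ℝ) ^ p = 2 ^ (p - 1) * 2 := by
    rw [← rpow_add_one two_ne_zero, sub_add_cancel]
  calc ∑ i ∈ s, w i * |y i| ^ p = ∑ i ∈ s, w i * |(y i - c) + c| ^ p := by
        simp only [sub_add_cancel]
    _ ≤ ∑ i ∈ s, w i * (2 ^ (p - 1) * (|y i - c| ^ p + |c| ^ p)) :=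
        sum_le_sum fun i hi => mul_le_mul_of_nonneg_left (abs_add_rpow_le hp _ _) (hw i hi)
    _ = 2 ^ (p - 1) * (A + |c| ^ p) := by
        simp_rw [mul_left_comm (w _) (2 ^ (p - 1)), ← mul_sum, mul_add, sum_add_distrib,
          ← sum_mul, hw', one_mul]
        rw [mul_add]
    _ ≤ 2 ^ p * A := by
        rw [htwo]
        have : (0 : ℝ) ≤ 2 ^ (p - 1) := by positivity
        nlinarith

end WeightedMean

lemma two_rpow_neg_mul_sum_abs_rpow_le_of_mean_eq_zero {ι κ : Type*} [Fintype ι] [Fintype κ] {w : ι → ℝ}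
    {p : ℝ} (hw : ∀ i, 0 ≤ w i) (hw' : ∑ i, w i = 1) (hp : 1 ≤ p) (x : ι → κ → ℝ)
    (hx : ∑ i, w i • x i = 0) (c : κ → ℝ) :
    (2 : ℝ) ^ (-p) * ∑ i, w i * ∑ j, |x i j| ^ p ≤ ∑ i, w i * ∑ j, |x i j - c j| ^ p := by
  rw [rpow_neg zero_le_two, inv_mul_le_iff₀ (by positivity)]
  have hswap (f : ι → κ → ℝ) : ∑ i, w i * ∑ j, f i j = ∑ j, ∑ i, w i * f i j := by
    simp_rw [mul_sum]
    exact sum_comm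
  rw [hswap, hswap, mul_sum]
  gcongr with j
  refine sum_mul_abs_rpow_le_two_rpow_mul_of_mean_eq_zero (fun i _ => hw i) hw' hp _ ?_ _
  simpa [Finset.sum_apply] using congrFun hx j

theorem stmt_13_general (n d : ℕ) (p : ℝ) (hp : 1 ≤ p)
    (lam : Fin n → ℝ) (hlam : ∀ i, 0 ≤ lam i) (hsum : ∑ i, lam i = 1)
    (x : Fin n → Fin d → ℝ) (hcenter : ∑ i, lam i • x i = (0 : Fin d → ℝ)) :
    (2 : ℝ) ^ (-p) * ∑ i, lam i * ∑ j, |x i j| ^ p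
        ≤ ⨅ c : Fin d → ℝ, ∑ i, lam i * ∑ j, |x i j - c j| ^ p ∧
    (⨅ c : Fin d → ℝ, ∑ i, lam i * ∑ j, |x i j - c j| ^ p)
        ≤ ∑ i, lam i * ∑ j, |x i j| ^ p := by
  refine ⟨le_ciInf (two_rpow_neg_mul_sum_abs_rpow_le_of_mean_eq_zero hlam hsum hp x hcenter), ?_⟩
  have hbdd : BddBelow (Set.range fun c : Fin d → ℝ => ∑ i, lam i * ∑ j, |x i j - c j| ^ p) :=
    ⟨0, by
      rintro _ ⟨c, rfl⟩
      exact sum_nonneg fun i _ => mul_nonneg (hlam i) (by positivity)⟩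
  simpa using ciInf_le hbdd 0

/-- For centered weighted points in `ℝ^d` and `p ∈ [1,2]`, the optimal `ℓ_p^p`-median cost is
within the factors `[2^{-p}, 1]` of the cost of using the origin as center. -/
theorem stmt_13 (n d : ℕ) (hn : 1 ≤ n) (hd : 1 ≤ d) (p : ℝ) (hp : 1 ≤ p) (hp2 : p ≤ 2)
    (lam : Fin n → ℝ) (hlam : ∀ i, 0 ≤ lam i) (hsum : ∑ i, lam i = 1)
    (x : Fin n → Fin d → ℝ) (hcenter : ∑ i, lam i • x i = (0 : Fin d → ℝ)) :
    (2 : ℝ) ^ (-p) * ∑ i, lam i * ∑ j, |x i j| ^ p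
        ≤ ⨅ c : Fin d → ℝ, ∑ i, lam i * ∑ j, |x i j - c j| ^ p ∧
    (⨅ c : Fin d → ℝ, ∑ i, lam i * ∑ j, |x i j - c j| ^ p)
        ≤ ∑ i, lam i * ∑ j, |x i j| ^ p :=
  stmt_13_general n d p hp lam hlam hsum x hcenter
end
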